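/- Strong normalization for the simply-typed λ-calculus: if [] ⊢ M : A, then M is strongly normalizing with respect to one-step β-reduction. -/

import Mathlib

inductive Ty : Type
  | iota : Ty
  | arr : Ty → Ty → Ty

inductive Tm : Type
  | var : ℕ → Tm
  | const : Tm
  | app : Tm → Tm → Tm
  | abs : Ty → Tm → Tm

def liftRen (ρ : ℕ → ℕ) : ℕ → ℕ
  | 0 => 0
  | n + 1 => ρ n + 1

def rename (ρ : ℕ → ℕ) : Tm → Tm
  | Tm.var n => Tm.var (ρ n)
  | Tm.const => Tm.const
  | Tm.app m n => Tm.app (rename ρ m) (rename ρ n)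
  | Tm.abs a r => Tm.abs a (rename (liftRen ρ) r)

def liftSub (σ : ℕ → Tm) : ℕ → Tm
  | 0 => Tm.var 0
  | n + 1 => rename Nat.succ (σ n)

/-- Simultaneous capture-avoiding substitution. -/
def subst (σ : ℕ → Tm) : Tm → Tm
  | Tm.var n => σ n
  | Tm.const => Tm.const
  | Tm.app m n => Tm.app (subst σ m) (subst σ n)
  | Tm.abs a r => Tm.abs a (subst (liftSub σ) r)

/-- `subst0 s t` is `t[0 := s]`. -/
def subst0 (s : Tm) (t : Tm) : Tm :=
  subst (fun n => match n with | 0 => s | Nat.succ k => Tm.var k) t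

inductive Typed : List Ty → Tm → Ty → Prop
  | var {Γ : List Ty} {n : ℕ} {a : Ty} :
      Γ[n]? = some a → Typed Γ (Tm.var n) a
  | const {Γ : List Ty} {a : Ty} : Typed Γ Tm.const a
  | app {Γ : List Ty} {m n : Tm} {a b : Ty} :
      Typed Γ m (Ty.arr a b) → Typed Γ n a → Typed Γ (Tm.app m n) b
  | abs {Γ : List Ty} {r : Tm} {a b : Ty} :
      Typed (a :: Γ) r b → Typed Γ (Tm.abs a r) (Ty.arr a b)

/-- One-step (β) reduction. -/
inductive Step : Tm → Tm → Prop
  | beta {a : Ty} {r m : Tm} : Step (Tm.app (Tm.abs a r) m) (subst0 m r)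
  | appl {m m' n : Tm} : Step m m' → Step (Tm.app m n) (Tm.app m' n)
  | appr {m n n' : Tm} : Step n n' → Step (Tm.app m n) (Tm.app m n')
  | abs {a : Ty} {r r' : Tm} : Step r r' → Step (Tm.abs a r) (Tm.abs a r')

/-- Strong normalization. -/
inductive SN : Tm → Prop
  | intro {M : Tm} : (∀ M', Step M M' → SN M') → SN M

/-- Tait-style reducibility, by recursion on the type. -/
def Red : Tm → Ty → Prop
  | M, Ty.iota => Typed [] M Ty.iota ∧ SN M
  | M, Ty.arr a b => Typed [] M (Ty.arr a b) ∧ ∀ U, Red U a → Red (Tm.app M U) b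

/-!
Tait's reducibility method in Girard's formulation. By induction on types, each predicate
`Red · a` is a reducibility candidate: its members are strongly normalizing, it is closed under
reduction, and it contains every neutral term all of whose one-step reducts it contains. The
fundamental lemma then shows that substituting reducible terms for the free variables of a typed
term yields a reducible term; for a closed term the identity substitution qualifies.

Since `Red` only speaks of closed terms, the constant takes over the role that variables play in
the usual argument: it is neutral, normal and of every type, so it inhabits every candidate.
-/

/-! ### Substitution calculus -/

theorem liftRen_ext {ρ ρ' : ℕ → ℕ} (h : ∀ n, ρ n = ρ' n) : ∀ n, liftRen ρ n = liftRen ρ' n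
  | 0 => rfl
  | n + 1 => by simp [liftRen, h n]

theorem rename_ext {ρ ρ' : ℕ → ℕ} (h : ∀ n, ρ n = ρ' n) : ∀ t, rename ρ t = rename ρ' t
  | Tm.var n => by simp [rename, h n]
  | Tm.const => rfl
  | Tm.app m n => by simp [rename, rename_ext h m, rename_ext h n]
  | Tm.abs a r => by simp [rename, rename_ext (liftRen_ext h) r]

theorem liftSub_ext {σ σ' : ℕ → Tm} (h : ∀ n, σ n = σ' n) : ∀ n, liftSub σ n = liftSub σ' n
  | 0 => rfl
  | n + 1 => by simp [liftSub, h n]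

theorem subst_ext {σ σ' : ℕ → Tm} (h : ∀ n, σ n = σ' n) : ∀ t, subst σ t = subst σ' t
  | Tm.var n => h n
  | Tm.const => rfl
  | Tm.app m n => by simp [subst, subst_ext h m, subst_ext h n]
  | Tm.abs a r => by simp [subst, subst_ext (liftSub_ext h) r]

theorem liftRen_liftRen (ρ ρ' : ℕ → ℕ) :
    ∀ n, liftRen ρ (liftRen ρ' n) = liftRen (fun k => ρ (ρ' k)) n
  | 0 => rfl
  | _ + 1 => rfl

theorem rename_rename (ρ ρ' : ℕ → ℕ) :
    ∀ t, rename ρ (rename ρ' t) = rename (fun n => ρ (ρ' n)) t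
  | Tm.var n => rfl
  | Tm.const => rfl
  | Tm.app m n => by simp [rename, rename_rename ρ ρ' m, rename_rename ρ ρ' n]
  | Tm.abs a r => by
      simp only [rename, rename_rename (liftRen ρ) (liftRen ρ') r]
      exact congrArg _ (rename_ext (liftRen_liftRen ρ ρ') r)

theorem subst_rename (σ : ℕ → Tm) (ρ : ℕ → ℕ) :
    ∀ t, subst σ (rename ρ t) = subst (fun n => σ (ρ n)) t
  | Tm.var n => rfl
  | Tm.const => rfl
  | Tm.app m n => by simp [rename, subst, subst_rename σ ρ m, subst_rename σ ρ n]
  | Tm.abs a r => by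
      simp only [rename, subst, subst_rename (liftSub σ) (liftRen ρ) r]
      exact congrArg _ (subst_ext (fun n => by cases n <;> rfl) r)

theorem rename_subst (ρ : ℕ → ℕ) (σ : ℕ → Tm) :
    ∀ t, rename ρ (subst σ t) = subst (fun n => rename ρ (σ n)) t
  | Tm.var n => rfl
  | Tm.const => rfl
  | Tm.app m n => by simp [rename, subst, rename_subst ρ σ m, rename_subst ρ σ n]
  | Tm.abs a r => by
      simp only [rename, subst, rename_subst (liftRen ρ) (liftSub σ) r]
      refine congrArg _ (subst_ext (fun n => ?_) r)
      cases n with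
      | zero => rfl
      | succ n =>
          show rename (liftRen ρ) (rename Nat.succ (σ n)) = rename Nat.succ (rename ρ (σ n))
          rw [rename_rename, rename_rename]
          rfl

theorem subst_subst (σ τ : ℕ → Tm) :
    ∀ t, subst σ (subst τ t) = subst (fun n => subst σ (τ n)) t
  | Tm.var n => rfl
  | Tm.const => rfl
  | Tm.app m n => by simp [subst, subst_subst σ τ m, subst_subst σ τ n]
  | Tm.abs a r => by
      simp only [subst, subst_subst (liftSub σ) (liftSub τ) r]
      refine congrArg _ (subst_ext (fun n => ?_) r)
      cases n with
      | zero => rfl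
      | succ n =>
          show subst (liftSub σ) (rename Nat.succ (τ n)) = rename Nat.succ (subst σ (τ n))
          rw [subst_rename, rename_subst]
          rfl

theorem subst_var : ∀ t, subst Tm.var t = t
  | Tm.var n => rfl
  | Tm.const => rfl
  | Tm.app m n => by simp [subst, subst_var m, subst_var n]
  | Tm.abs a r => by
      simp only [subst]
      rw [subst_ext (fun n => by cases n <;> rfl : ∀ n, liftSub Tm.var n = Tm.var n) r,
        subst_var r]

def consSub (s : Tm) (σ : ℕ → Tm) : ℕ → Tm
  | 0 => s
  | n + 1 => σ n

theorem subst0_eq_subst_consSub (s t : Tm) : subst0 s t = subst (consSub s Tm.var) t :=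
  subst_ext (fun n => by cases n <;> rfl) t

theorem subst0_subst_liftSub (s : Tm) (σ : ℕ → Tm) (t : Tm) :
    subst0 s (subst (liftSub σ) t) = subst (consSub s σ) t := by
  rw [subst0_eq_subst_consSub, subst_subst]
  refine subst_ext (fun n => ?_) t
  cases n with
  | zero => rfl
  | succ n =>
      show subst (consSub s Tm.var) (rename Nat.succ (σ n)) = σ n
      rw [subst_rename]
      exact subst_var (σ n)

theorem subst_subst0 (σ : ℕ → Tm) (m r : Tm) :
    subst σ (subst0 m r) = subst0 (subst σ m) (subst (liftSub σ) r) := by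
  rw [subst0_eq_subst_consSub, subst_subst, subst0_subst_liftSub]
  exact subst_ext (fun n => by cases n <;> rfl) r

theorem step_subst {t t' : Tm} (st : Step t t') (σ : ℕ → Tm) :
    Step (subst σ t) (subst σ t') := by
  induction st generalizing σ with
  | @beta a r m =>
      show Step (Tm.app (Tm.abs a (subst (liftSub σ) r)) (subst σ m)) _
      rw [subst_subst0]
      exact Step.beta
  | appl _ ih => exact Step.appl (ih σ)
  | appr _ ih => exact Step.appr (ih σ)
  | abs _ ih => exact Step.abs (ih (liftSub σ))

/-! ### Typing -/

theorem typed_rename {Γ : List Ty} {t : Tm} {a : Ty} (ht : Typed Γ t a) {Δ : List Ty}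
    {ρ : ℕ → ℕ} (hρ : ∀ n b, Γ[n]? = some b → Δ[ρ n]? = some b) :
    Typed Δ (rename ρ t) a := by
  induction ht generalizing Δ ρ with
  | var h => exact Typed.var (hρ _ _ h)
  | const => exact Typed.const
  | app _ _ ih₁ ih₂ => exact Typed.app (ih₁ hρ) (ih₂ hρ)
  | abs _ ih =>
      refine Typed.abs (ih fun n c hn => ?_)
      cases n with
      | zero => exact hn
      | succ n => exact hρ n c hn

theorem typed_subst {Γ : List Ty} {t : Tm} {a : Ty} (ht : Typed Γ t a) {Δ : List Ty}
    {σ : ℕ → Tm} (hσ : ∀ n b, Γ[n]? = some b → Typed Δ (σ n) b) :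
    Typed Δ (subst σ t) a := by
  induction ht generalizing Δ σ with
  | var h => exact hσ _ _ h
  | const => exact Typed.const
  | app _ _ ih₁ ih₂ => exact Typed.app (ih₁ hσ) (ih₂ hσ)
  | abs _ ih =>
      refine Typed.abs (ih fun n c hn => ?_)
      cases n with
      | zero => exact Typed.var hn
      | succ n => exact typed_rename (hσ n c hn) fun _ _ hk => hk

theorem typed_subst0 {Γ : List Ty} {r m : Tm} {a b : Ty}
    (hr : Typed (a :: Γ) r b) (hm : Typed Γ m a) : Typed Γ (subst0 m r) b := by
  refine typed_subst hr fun n c hn => ?_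
  cases n with
  | zero =>
      obtain rfl : a = c := by simpa using hn
      exact hm
  | succ n => exact Typed.var hn

theorem Typed.step {Γ : List Ty} {M M' : Tm} {A : Ty} (ht : Typed Γ M A) (st : Step M M') :
    Typed Γ M' A := by
  induction st generalizing Γ A with
  | beta =>
      cases ht with
      | app h₁ h₂ => cases h₁ with | abs h₃ => exact typed_subst0 h₃ h₂
  | appl _ ih => cases ht with | app h₁ h₂ => exact Typed.app (ih h₁) h₂
  | appr _ ih => cases ht with | app h₁ h₂ => exact Typed.app h₁ (ih h₂)
  | abs _ ih => cases ht with | abs h₁ => exact Typed.abs (ih h₁)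

/-! ### Strong normalization -/

theorem SN.step {M M' : Tm} (h : SN M) (st : Step M M') : SN M' := by
  cases h with | intro f => exact f M' st

theorem SN.of_subst {σ : ℕ → Tm} {t : Tm} (h : SN (subst σ t)) : SN t := by
  generalize e : subst σ t = u at h
  induction h generalizing t with
  | intro _ ih =>
      subst e
      exact SN.intro fun t' st => ih _ (step_subst st σ) rfl

theorem SN.of_app_left {M N : Tm} (h : SN (Tm.app M N)) : SN M := by
  generalize e : Tm.app M N = u at h
  induction h generalizing M with
  | intro _ ih =>
      subst e
      exact SN.intro fun M' st => ih _ (Step.appl st) rfl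

/-! ### Reducibility candidates -/

def Tm.Neutral : Tm → Prop
  | Tm.abs _ _ => False
  | _ => True

theorem Red.typed {M : Tm} {a : Ty} (h : Red M a) : Typed [] M a := by
  cases a <;> exact h.1

structure RedIsCandidate (a : Ty) : Prop where
  sn : ∀ {M}, Red M a → SN M
  step : ∀ {M M'}, Red M a → Step M M' → Red M' a
  of_neutral : ∀ {M}, M.Neutral → Typed [] M a → (∀ M', Step M M' → Red M' a) → Red M a

namespace RedIsCandidate

variable {a b : Ty}

theorem red_const (h : RedIsCandidate a) : Red Tm.const a :=
  h.of_neutral trivial Typed.const fun _ st => nomatch st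

theorem iota : RedIsCandidate Ty.iota where
  sn h := h.2
  step h st := ⟨h.1.step st, h.2.step st⟩
  of_neutral _ ht h := ⟨ht, SN.intro fun M' st => (h M' st).2⟩

theorem red_app_of_neutral (ha : RedIsCandidate a) (hb : RedIsCandidate b) {M : Tm}
    (hM : M.Neutral) (ht : Typed [] M (Ty.arr a b))
    (hred : ∀ M', Step M M' → Red M' (Ty.arr a b)) {U : Tm} (hU : Red U a) :
    Red (Tm.app M U) b := by
  induction ha.sn hU with
  | intro _ ih =>
      refine hb.of_neutral trivial (Typed.app ht hU.typed) fun _ st => ?_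
      cases st with
      | beta => exact hM.elim
      | appl st => exact (hred _ st).2 _ hU
      | appr st => exact ih _ st (ha.step hU st)

theorem arr (ha : RedIsCandidate a) (hb : RedIsCandidate b) : RedIsCandidate (Ty.arr a b) where
  sn h := (hb.sn (h.2 _ ha.red_const)).of_app_left
  step h st := ⟨h.1.step st, fun U hU => hb.step (h.2 U hU) (Step.appl st)⟩
  of_neutral hM ht hred := ⟨ht, fun _ hU => red_app_of_neutral ha hb hM ht hred hU⟩

end RedIsCandidate

theorem Ty.redIsCandidate : ∀ a : Ty, RedIsCandidate a
  | Ty.iota => RedIsCandidate.iota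
  | Ty.arr a b => a.redIsCandidate.arr b.redIsCandidate

theorem red_app_abs {a b : Ty} {r U : Tm} (hr : SN r) (hty : Typed [a] r b)
    (h : ∀ V, Red V a → Red (subst0 V r) b) (hU : Red U a) :
    Red (Tm.app (Tm.abs a r) U) b := by
  induction hr generalizing U with
  | intro _ ihr =>
      induction a.redIsCandidate.sn hU with
      | intro _ ihU =>
          refine b.redIsCandidate.of_neutral trivial (Typed.app (Typed.abs hty) hU.typed)
            fun _ st => ?_
          cases st with
          | beta => exact h _ hU
          | appl st =>
              cases st with
              | abs st =>
                  exact ihr _ st (hty.step st)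
                    (fun V hV => b.redIsCandidate.step (h V hV) (step_subst st _)) hU
          | appr st => exact ihU _ st (a.redIsCandidate.step hU st)

theorem red_abs {a b : Ty} {r : Tm} (hty : Typed [a] r b)
    (h : ∀ U, Red U a → Red (subst0 U r) b) : Red (Tm.abs a r) (Ty.arr a b) :=
  ⟨Typed.abs hty, fun _ hU =>
    red_app_abs (b.redIsCandidate.sn (h _ a.redIsCandidate.red_const)).of_subst hty h hU⟩

theorem red_consSub {Γ : List Ty} {σ : ℕ → Tm} {U : Tm} {a : Ty} (hU : Red U a)
    (hσ : ∀ n c, Γ[n]? = some c → Red (σ n) c) :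
    ∀ n c, (a :: Γ)[n]? = some c → Red (consSub U σ n) c
  | 0, c, hn => by
      obtain rfl : a = c := by simpa using hn
      exact hU
  | n + 1, c, hn => hσ n c hn

theorem Typed.red_subst {Γ : List Ty} {M : Tm} {A : Ty} (ht : Typed Γ M A) {σ : ℕ → Tm}
    (hσ : ∀ n a, Γ[n]? = some a → Red (σ n) a) : Red (subst σ M) A := by
  induction ht generalizing σ with
  | var h => exact hσ _ _ h
  | const => exact RedIsCandidate.red_const (Ty.redIsCandidate _)
  | app _ _ ih₁ ih₂ => exact (ih₁ hσ).2 _ (ih₂ hσ)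
  | @abs Γ r a b h ih =>
      refine red_abs (typed_subst h fun n c hn => ?_) fun U hU => ?_
      · cases n with
        | zero =>
            obtain rfl : a = c := by simpa using hn
            exact Typed.var rfl
        | succ n => exact typed_rename (hσ n c hn).typed fun _ _ hk => nomatch hk
      · rw [subst0_subst_liftSub]
        exact ih (red_consSub hU hσ)

theorem strong_normalization {M : Tm} {A : Ty} (ht : Typed [] M A) : SN M := by
  have hred : Red (subst Tm.var M) A := ht.red_subst fun _ _ hn => nomatch hn
  rw [subst_var] at hred
  exact A.redIsCandidate.sn hred
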